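/- arXiv:2407.20362 — 7 statements merged into one kernel-verified Lean document; each statement's English description precedes it below -/
import Mathlib

section
/- Let M be a real symmetric n×n matrix. For k = 1,…,n, let M_k denote the k×k leading principal submatrix of M, and for i = 0,…,k let c_{k,i} denote the coefficient of sⁱ in the univariate polynomial s ↦ det(M_k + s I_k), where I_k is the k×k identity matrix. Then M is positive semidefinite if and only if c_{k,i} ≥ 0 for all k = 1,…,n and i = 0,…,k. -/
/-!
For a symmetric matrix `A`, `det (A + s • 1)` is the characteristic polynomial of `-A`, i.e.
`∏ i, (s + λᵢ)` over the eigenvalues `λᵢ` of `A`. If all `λᵢ ≥ 0`, this product of polynomials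
with nonnegative coefficients has nonnegative coefficients. Conversely, a nonzero polynomial with
nonnegative coefficients is positive on `(0, ∞)`, so it cannot vanish at `-λᵢ`; hence `λᵢ ≥ 0`.
Positive semidefiniteness is inherited by the leading principal submatrices, and for the converse
only the full matrix `k = n` is needed.
-/

open Matrix Polynomial

namespace Polynomial

section OrderedSemiring

variable {R : Type*} [CommSemiring R] [PartialOrder R]

theorem coeff_prod_nonneg [IsOrderedRing R] {ι : Type*} (s : Finset ι) (f : ι → R[X])
    (h : ∀ j ∈ s, ∀ i, 0 ≤ (f j).coeff i) (i : ℕ) : 0 ≤ (∏ j ∈ s, f j).coeff i := by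
  induction s using Finset.cons_induction generalizing i with
  | empty => simp only [Finset.prod_empty, coeff_one]; split_ifs <;> simp
  | cons a s ha ih =>
    rw [Finset.prod_cons, coeff_mul]
    exact Finset.sum_nonneg fun p _ => mul_nonneg (h a (Finset.mem_cons_self a s) _)
      (ih (fun j hj => h j (Finset.mem_cons_of_mem hj)) _)

theorem eval_pos_of_coeff_nonneg [IsStrictOrderedRing R] {p : R[X]} (hp : p ≠ 0)
    (h : ∀ i, 0 ≤ p.coeff i) {x : R} (hx : 0 < x) : 0 < p.eval x := by
  rw [eval_eq_sum, Polynomial.sum]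
  refine Finset.sum_pos' (fun i _ => mul_nonneg (h i) (pow_nonneg hx.le i))
    ⟨p.natDegree, natDegree_mem_support_of_nonzero hp, mul_pos ?_ (pow_pos hx _)⟩
  exact (h _).lt_of_ne' (leadingCoeff_ne_zero.mpr hp)

end OrderedSemiring

variable {R : Type*} [CommRing R] [LinearOrder R] [IsStrictOrderedRing R]

theorem coeff_prod_X_add_C_nonneg_iff {ι : Type*} (s : Finset ι) (a : ι → R) :
    (∀ i, 0 ≤ (∏ j ∈ s, (X + C (a j))).coeff i) ↔ ∀ j ∈ s, 0 ≤ a j := by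
  constructor
  · intro h j hj
    by_contra! hneg
    have hroot : (∏ j ∈ s, (X + C (a j))).eval (-a j) = 0 := by
      rw [eval_prod]
      exact Finset.prod_eq_zero hj (by simp)
    have hmonic : (∏ j ∈ s, (X + C (a j))).Monic :=
      monic_prod_of_monic _ _ fun j _ => monic_X_add_C _
    exact (eval_pos_of_coeff_nonneg hmonic.ne_zero h (neg_pos.mpr hneg)).ne' hroot
  · intro h
    refine coeff_prod_nonneg s _ fun j hj i => ?_
    rcases i with _ | _ | i
    · simpa using h j hj
    · simp
    · simp [coeff_X]

end Polynomial

theorem Matrix.det_map_C_add_X_smul_one {n R : Type*} [Fintype n] [DecidableEq n] [CommRing R]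
    (A : Matrix n n R) : (A.map C + (X : R[X]) • 1).det = (-A).charpoly := by
  rw [charpoly, charmatrix, add_comm, RingHom.mapMatrix_apply, Matrix.map_neg _ (map_neg C),
    sub_neg_eq_add, smul_one_eq_diagonal, scalar_apply]

theorem Matrix.IsHermitian.charpoly_neg {n 𝕜 : Type*} [Fintype n] [DecidableEq n] [RCLike 𝕜]
    {A : Matrix n n 𝕜} (hA : A.IsHermitian) :
    (-A).charpoly = ∏ i, (X + C (hA.eigenvalues i : 𝕜)) := by
  rw [← cfc_neg_id (R := ℝ) A hA.isSelfAdjoint, hA.charpoly_cfc_eq]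
  simp [sub_eq_add_neg]

theorem Matrix.IsHermitian.posSemidef_iff_coeff_det_nonneg {n : Type*} [Fintype n] [DecidableEq n]
    {A : Matrix n n ℝ} (hA : A.IsHermitian) :
    A.PosSemidef ↔ ∀ i, 0 ≤ (A.map C + (X : ℝ[X]) • 1).det.coeff i := by
  rw [hA.posSemidef_iff_eigenvalues_nonneg, det_map_C_add_X_smul_one, hA.charpoly_neg]
  simpa [Pi.le_def] using (coeff_prod_X_add_C_nonneg_iff Finset.univ hA.eigenvalues).symm

/-- a real symmetric `n × n` matrix `M` is positive semidefinite if and only if,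
for every `k = 1, …, n` and `i = 0, …, k`, the coefficient of `sⁱ` in the univariate
polynomial `s ↦ det(M_k + s I_k)` is nonnegative, where `M_k` is the `k × k` leading
principal submatrix of `M`. -/
theorem stmt_1 {n : ℕ} (M : Matrix (Fin n) (Fin n) ℝ) (hM : M.IsSymm) :
    M.PosSemidef ↔
      ∀ (k : ℕ), 1 ≤ k → ∀ (hkn : k ≤ n), ∀ i : ℕ, i ≤ k →
        0 ≤ (((M.submatrix (Fin.castLE hkn) (Fin.castLE hkn)).map (fun a => Polynomial.C a)
              + (Polynomial.X : Polynomial ℝ) •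
                  (1 : Matrix (Fin k) (Fin k) (Polynomial ℝ))).det).coeff i := by
  have hMh : M.IsHermitian := by rwa [IsHermitian, conjTranspose_eq_transpose_of_trivial]
  constructor
  · intro hpsd k _ hkn i _
    have hsub := hpsd.submatrix (Fin.castLE hkn)
    exact hsub.isHermitian.posSemidef_iff_coeff_det_nonneg.mp hsub i
  · intro h
    rcases Nat.eq_zero_or_pos n with rfl | hn
    · rw [Subsingleton.elim M 0]
      exact .zero
    have hcoeff := h n hn le_rfl
    simp only [Fin.castLE_rfl, submatrix_id_id] at hcoeff
    refine hMh.posSemidef_iff_coeff_det_nonneg.mpr fun i => ?_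
    rcases le_or_gt i n with hi | hi
    · exact hcoeff i hi
    · rw [coeff_eq_zero_of_natDegree_lt (by simpa [det_map_C_add_X_smul_one] using hi)]
end

section
/- Let P(t) be a symmetric n×n univariate polynomial matrix of degree at most d, and define the polynomial matrix Q(t) := (t²+1)ᵈ · P((t²-1)/(t²+1)). Then P(t) is positive semidefinite for every t ∈ [-1,1] if and only if Q(t) is positive semidefinite for every t ∈ ℝ. -/
/-!
The map `t ↦ (t² - 1) / (t² + 1)` sends `ℝ` onto `[-1, 1)`, and the factor `(t² + 1)ᵈ` is positive,
so the right-hand side says exactly that `P` is positive semidefinite on `[-1, 1)`. The endpoint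
`1` follows because the positive semidefinite cone is closed and `s ↦ P(s)` is continuous.
-/

open Matrix Polynomial

section PosSemidef

open scoped ComplexOrder

variable {n 𝕜 : Type*} [RCLike 𝕜]

theorem Matrix.isClosed_setOf_posSemidef [Fintype n] : IsClosed {M : Matrix n n 𝕜 | M.PosSemidef} := by
  simp only [posSemidef_iff_dotProduct_mulVec, Set.ofPred_and, Set.ofPred_forall]
  refine .inter (isClosed_eq continuous_id.matrix_conjTranspose continuous_id) ?_
  exact isClosed_iInter fun x ↦ isClosed_le continuous_const <|
    continuous_const.dotProduct (continuous_id.matrix_mulVec continuous_const)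

theorem Matrix.posSemidef_smul_iff {A : Matrix n n 𝕜} {c : ℝ} (hc : 0 < c) :
    (c • A).PosSemidef ↔ A.PosSemidef :=
  ⟨fun h ↦ by simpa [smul_smul, hc.ne'] using h.smul (inv_nonneg.2 hc.le),
    fun h ↦ h.smul hc.le⟩

end PosSemidef

theorem range_sq_sub_one_div_sq_add_one :
    Set.range (fun t : ℝ ↦ (t ^ 2 - 1) / (t ^ 2 + 1)) = Set.Ico (-1) 1 := by
  ext u
  constructor
  · rintro ⟨t, rfl⟩
    have ht : 0 < t ^ 2 + 1 := by positivity
    constructor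
    · rw [le_div_iff₀ ht]; nlinarith
    · rw [div_lt_one ht]; linarith
  · rintro ⟨hu₁, hu₂⟩
    have hu : 0 < 1 - u := by linarith
    refine ⟨√((1 + u) / (1 - u)), ?_⟩
    dsimp only
    rw [Real.sq_sqrt (div_nonneg (by linarith) hu.le)]
    field_simp
    ring

theorem stmt_2_general {n d : ℕ} (P : Matrix (Fin n) (Fin n) (Polynomial ℝ)) :
    (∀ t ∈ Set.Icc (-1 : ℝ) 1, (P.map (Polynomial.eval t)).PosSemidef) ↔
    (∀ t : ℝ,
      ((t ^ 2 + 1) ^ d •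
        P.map (Polynomial.eval ((t ^ 2 - 1) / (t ^ 2 + 1)))).PosSemidef) := by
  have hrange := range_sq_sub_one_div_sq_add_one
  have hclosed : IsClosed {s : ℝ | (P.map (eval s)).PosSemidef} :=
    isClosed_setOf_posSemidef.preimage <| continuous_matrix fun i j ↦ (P i j).continuous
  simp only [posSemidef_smul_iff (pow_pos (by positivity : (0 : ℝ) < _ ^ 2 + 1) d)]
  constructor
  · intro h t
    exact h _ (Set.Ico_subset_Icc_self (hrange ▸ Set.mem_range_self t))
  · intro h
    rw [← closure_Ico (by norm_num : (-1 : ℝ) ≠ 1), ← hrange]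
    exact closure_minimal (Set.range_subset_iff.2 h) hclosed

/-- for a symmetric univariate polynomial matrix `P(t)` of degree at most `d`,
`P(t) ⪰ 0` for all `t ∈ [-1,1]` if and only if the polynomial matrix
`Q(t) = (t²+1)ᵈ · P((t²-1)/(t²+1))` satisfies `Q(t) ⪰ 0` for all `t ∈ ℝ`. -/
theorem stmt_2 {n d : ℕ} (P : Matrix (Fin n) (Fin n) (Polynomial ℝ))
    (hsymm : P.IsSymm) (hdeg : ∀ i j, (P i j).natDegree ≤ d) :
    (∀ t ∈ Set.Icc (-1 : ℝ) 1, (P.map (Polynomial.eval t)).PosSemidef) ↔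
    (∀ t : ℝ,
      ((t ^ 2 + 1) ^ d •
        P.map (Polynomial.eval ((t ^ 2 - 1) / (t ^ 2 + 1)))).PosSemidef) :=
  stmt_2_general P
end

section
/- Let E = {0} ∪ {x ∈ ℝ² \ {0} : x₁²x₂²/(x₁²+x₂²) + 2x₁² + 3x₂² ≤ 1}. Then there do not exist a nonnegative integer m and real positive semidefinite 2×2 matrices P₁,…,P_m such that E = {x ∈ ℝ² : xᵀPᵢx ≤ 1 for i = 1,…,m}. -/
/-!
The function `f(x) = x₁²x₂²/(x₁²+x₂²) + 2x₁² + 3x₂²` is `2`-homogeneous and positive off `0`,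
and `E` is its sublevel set `{f ≤ 1}`. If `E` were cut out by finitely many quadratic forms
`qᵢ`, homogeneity would force `f = maxᵢ qᵢ` off `0`. On the line `x = (1, k)` infinitely many
`k` then share a maximizing index `i`, so the rational function `k² / (1 + k²) + 2 + 3k²` would
agree with the quadratic polynomial `qᵢ(1, k)` at infinitely many points, which is impossible.
-/

open Matrix Polynomial

section Sublevel

variable {V ι : Type*} [AddCommGroup V] [Module ℝ V] {f : V → ℝ} {q : ι → V → ℝ}

theorem le_iff_forall_le_of_sublevel_eq
    (hf : ∀ (t : ℝ) (x : V), 0 < t → f (t • x) = t ^ 2 * f x)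
    (hq : ∀ i (t : ℝ) (x : V), 0 < t → q i (t • x) = t ^ 2 * q i x)
    (hE : ∀ x ≠ 0, f x ≤ 1 ↔ ∀ i, q i x ≤ 1) {x : V} (hx : x ≠ 0) {s : ℝ} (hs : 0 < s) :
    f x ≤ s ↔ ∀ i, q i x ≤ s := by
  set t := (√s)⁻¹
  have ht : 0 < t := by positivity
  have ht2 : t ^ 2 = s⁻¹ := by rw [inv_pow, Real.sq_sqrt hs.le]
  have hscale : ∀ r : ℝ, t ^ 2 * r ≤ 1 ↔ r ≤ s := fun r => by
    rw [ht2, inv_mul_le_iff₀ hs, mul_one]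
  have := hE (t • x) (smul_ne_zero ht.ne' hx)
  simpa only [hf t x ht, hq _ t x ht, hscale] using this

theorem exists_eq_of_sublevel_eq [Finite ι]
    (hf : ∀ (t : ℝ) (x : V), 0 < t → f (t • x) = t ^ 2 * f x)
    (hq : ∀ i (t : ℝ) (x : V), 0 < t → q i (t • x) = t ^ 2 * q i x)
    (hfpos : ∀ x ≠ 0, 0 < f x) (hE : ∀ x ≠ 0, f x ≤ 1 ↔ ∀ i, q i x ≤ 1)
    {x : V} (hx : x ≠ 0) : ∃ i, q i x = f x := by
  have hfx := hfpos x hx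
  have hq_le : ∀ i, q i x ≤ f x := (le_iff_forall_le_of_sublevel_eq hf hq hE hx hfx).1 le_rfl
  by_contra! hne
  have hq_lt : ∀ i, q i x < f x := fun i => (hq_le i).lt_of_ne (hne i)
  obtain ⟨s, hs_pos, hs_lt, hs⟩ : ∃ s, 0 < s ∧ s < f x ∧ ∀ i, q i x ≤ s := by
    rcases isEmpty_or_nonempty ι with _ | _
    · exact ⟨f x / 2, by linarith, by linarith, fun i => isEmptyElim i⟩
    · obtain ⟨i₀, hi₀⟩ := Finite.exists_max fun i => q i x
      exact ⟨max (f x / 2) (q i₀ x), by positivity, max_lt (by linarith) (hq_lt i₀),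
        fun i => (hi₀ i).trans (le_max_right _ _)⟩
  exact hs_lt.not_ge ((le_iff_forall_le_of_sublevel_eq hf hq hE hx hs_pos).2 hs)

end Sublevel

theorem dotProduct_mulVec_smul {n : Type*} [Fintype n] (P : Matrix n n ℝ) (t : ℝ) (x : n → ℝ) :
    (t • x) ⬝ᵥ P *ᵥ (t • x) = t ^ 2 * (x ⬝ᵥ P *ᵥ x) := by
  rw [mulVec_smul, smul_dotProduct, dotProduct_smul, smul_eq_mul, smul_eq_mul]
  ring

theorem dotProduct_mulVec_one_cons (P : Matrix (Fin 2) (Fin 2) ℝ) (k : ℝ) :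
    ![1, k] ⬝ᵥ P *ᵥ ![1, k] = P 0 0 + (P 0 1 + P 1 0) * k + P 1 1 * k ^ 2 := by
  simp only [dotProduct, mulVec, Fin.sum_univ_two, cons_val_zero, cons_val_one, cons_val_fin_one,
    mul_one, one_mul]
  ring

/-- `maxForm x = max_{t ∈ [-1,1]} xᵀ P(t) x`, the maximum being attained at
`t = x₀x₁ / (x₀² + x₁²) ∈ [-1/2, 1/2]`. -/
noncomputable def maxForm (x : Fin 2 → ℝ) : ℝ :=
  x 0 ^ 2 * x 1 ^ 2 / (x 0 ^ 2 + x 1 ^ 2) + 2 * x 0 ^ 2 + 3 * x 1 ^ 2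

theorem maxForm_smul (t : ℝ) (x : Fin 2 → ℝ) : maxForm (t • x) = t ^ 2 * maxForm x := by
  simp only [maxForm, Pi.smul_apply, smul_eq_mul, mul_pow]
  rcases eq_or_ne (x 0 ^ 2 + x 1 ^ 2) 0 with h | h
  · rw [← mul_add, h, mul_zero, div_zero, div_zero]
    ring
  · rcases eq_or_ne t 0 with rfl | ht
    · simp
    · field_simp

theorem maxForm_pos {x : Fin 2 → ℝ} (hx : x ≠ 0) : 0 < maxForm x := by
  have hx' : x 0 ≠ 0 ∨ x 1 ≠ 0 := by
    by_contra! h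
    exact hx (funext fun i => by fin_cases i <;> simp [h.1, h.2])
  unfold maxForm
  rcases hx' with h | h <;> positivity

theorem maxForm_one_cons (k : ℝ) : maxForm ![1, k] = k ^ 2 / (1 + k ^ 2) + 2 + 3 * k ^ 2 := by
  simp [maxForm]

theorem finite_setOf_quadratic_eq (a b c : ℝ) :
    {k : ℝ | a + b * k + c * k ^ 2 = k ^ 2 / (1 + k ^ 2) + 2 + 3 * k ^ 2}.Finite := by
  set p : ℝ[X] :=
    (1 + X ^ 2) * (C a + C b * X + C c * X ^ 2) - (X ^ 2 + (2 + 3 * X ^ 2) * (1 + X ^ 2))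
  have hp : ∀ k, p.eval k
      = (1 + k ^ 2) * (a + b * k + c * k ^ 2 - (k ^ 2 / (1 + k ^ 2) + 2 + 3 * k ^ 2)) := by
    intro k
    simp only [p, eval_sub, eval_mul, eval_add, eval_pow, eval_C, eval_X, eval_one, eval_ofNat]
    field_simp
    ring
  -- the identity fails at one of `k = 0, ±1, 2`
  have hp0 : p ≠ 0 := by
    intro h
    have hk : ∀ k : ℝ, eval k p = 0 := by simp [h]
    have h0 := hk 0
    have h1 := hk 1
    have h2 := hk (-1)
    have h3 := hk 2
    simp only [p, eval_sub, eval_mul, eval_add, eval_pow, eval_C, eval_X, eval_one, eval_ofNat]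
      at h0 h1 h2 h3
    linarith
  refine (finite_setOfPred_isRoot hp0).subset fun k hk => ?_
  simp only [Set.mem_ofPred_eq, IsRoot.def, hp, sub_eq_zero.2 hk, mul_zero] at hk ⊢

/-- the set `E = {0} ∪ {x ∈ ℝ² \ {0} : x₁²x₂²/(x₁²+x₂²) + 2x₁² + 3x₂² ≤ 1}`
cannot be written as `{x : xᵀPᵢx ≤ 1, i = 1,…,m}` for finitely many real positive
semidefinite `2 × 2` matrices `P₁, …, P_m`. -/
theorem stmt_7 :
    ¬ ∃ (m : ℕ) (P : Fin m → Matrix (Fin 2) (Fin 2) ℝ),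
        (∀ i, (P i).PosSemidef) ∧
        ({0} ∪ {x : Fin 2 → ℝ | x ≠ 0 ∧
            (x 0) ^ 2 * (x 1) ^ 2 / ((x 0) ^ 2 + (x 1) ^ 2)
              + 2 * (x 0) ^ 2 + 3 * (x 1) ^ 2 ≤ 1}) =
          {x : Fin 2 → ℝ | ∀ i, x ⬝ᵥ (P i).mulVec x ≤ 1} := by
  rintro ⟨m, P, -, hset⟩
  have hE : ∀ x ≠ 0, maxForm x ≤ 1 ↔ ∀ i, x ⬝ᵥ P i *ᵥ x ≤ 1 := fun x hx => by
    simpa [hx, maxForm] using Set.ext_iff.1 hset x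
  have hmax : ∀ k : ℝ, ∃ i, ![1, k] ⬝ᵥ P i *ᵥ ![1, k] = maxForm ![1, k] := fun k =>
    exists_eq_of_sublevel_eq (fun t x _ => maxForm_smul t x)
      (fun i t x _ => dotProduct_mulVec_smul (P i) t x) (fun _ => maxForm_pos)
      hE (x := ![1, k]) (fun h => one_ne_zero (congrFun h 0))
  choose F hF using hmax
  obtain ⟨i, hi⟩ := Finite.exists_infinite_fiber F
  refine Set.infinite_coe_iff.1 hi
    ((finite_setOf_quadratic_eq (P i 0 0) (P i 0 1 + P i 1 0) (P i 1 1)).subset fun k hk => ?_)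
  have := hF k
  rwa [show F k = i from hk, dotProduct_mulVec_one_cons, maxForm_one_cons] at this
end

section
/- Let m ≥ 2 be an integer and let P₁, …, P_m be real positive semidefinite n×n matrices. If the set T = ⋂_{i=1}^m {x ∈ ℝⁿ : xᵀPᵢx ≤ 1} is compact, then T is a generalized ellipsoid of degree d centered at the origin for some d ≤ 2m-3. -/
/-!
Write `m = M + 2` and take the Chebyshev–Lobatto nodes `tₖ = cos (k π / (M + 1))`,
`k = 0, …, M + 1`: the endpoints `±1` and the `M` roots of the Chebyshev polynomial `U_M`.
From `U_M` one builds polynomials `wₖ` of degree at most `2M + 1 = 2m - 3`, nonnegative on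
`[-1, 1]`, with `wⱼ(tₖ) = δⱼₖ` and with vanishing derivative at the interior nodes. Then
`∑ wₖ - 1` has degree at most `2M + 1` but `2M + 2` roots counted with multiplicity, so the `wₖ`
sum to `1`. For `P(t) = ∑ wₖ(t) Pₖ` and `t ∈ [-1, 1]`, `xᵀP(t)x` is a convex combination of the
`xᵀPₖx` and equals `xᵀPₖx` at `t = tₖ`, which gives the set equality; boundedness of the
intersection gives the kernel condition.
-/

open Matrix Polynomial

/-- `E ⊆ ℝⁿ` is a generalized ellipsoid of degree `d` (GE-`d`) centered at the origin. -/
def IsGE (n d : ℕ) (E : Set (Fin n → ℝ)) : Prop :=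
  ∃ P : Matrix (Fin n) (Fin n) (Polynomial ℝ),
    P.IsSymm ∧
    (∀ i j, (P i j).natDegree ≤ d) ∧
    (∀ t ∈ Set.Icc (-1 : ℝ) 1, (P.map (Polynomial.eval t)).PosSemidef) ∧
    (∀ x : Fin n → ℝ,
      (∀ t ∈ Set.Icc (-1 : ℝ) 1, (P.map (Polynomial.eval t)).mulVec x = 0) → x = 0) ∧
    E = {x : Fin n → ℝ | ∀ t ∈ Set.Icc (-1 : ℝ) 1,
      x ⬝ᵥ (P.map (Polynomial.eval t)).mulVec x ≤ 1}

open Real Set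

section WeightedSum

variable {ι n : Type*} [Fintype ι]

noncomputable def weightedSum (w : ι → ℝ[X]) (P : ι → Matrix n n ℝ) : Matrix n n ℝ[X] :=
  ∑ i, w i • (P i).map C

lemma weightedSum_map_eval (w : ι → ℝ[X]) (P : ι → Matrix n n ℝ) (t : ℝ) :
    (weightedSum w P).map (eval t) = ∑ i, (w i).eval t • P i := by
  ext a b
  simp [weightedSum, Matrix.sum_apply, eval_finsetSum]

lemma dotProduct_sum_smul_mulVec [Fintype n] (a : ι → ℝ) (P : ι → Matrix n n ℝ) (x : n → ℝ) :
    x ⬝ᵥ (∑ i, a i • P i) *ᵥ x = ∑ i, a i * (x ⬝ᵥ P i *ᵥ x) := by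
  simp [Matrix.sum_mulVec, dotProduct_sum, Matrix.smul_mulVec]

lemma isSymm_weightedSum (w : ι → ℝ[X]) {P : ι → Matrix n n ℝ} (hP : ∀ i, (P i).IsSymm) :
    (weightedSum w P).IsSymm := by
  simp only [weightedSum, IsSymm, transpose_sum, transpose_smul, ← transpose_map]
  exact Finset.sum_congr rfl fun i _ => by rw [hP i]

lemma natDegree_weightedSum_le {d : ℕ} {w : ι → ℝ[X]} (hw : ∀ i, (w i).natDegree ≤ d)
    (P : ι → Matrix n n ℝ) (a b : n) : (weightedSum w P a b).natDegree ≤ d := by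
  simp only [weightedSum, Matrix.sum_apply, Matrix.smul_apply, Matrix.map_apply, smul_eq_mul]
  exact natDegree_sum_le_of_forall_le _ _ fun i _ => (natDegree_mul_C_le _ _).trans (hw i)

end WeightedSum

lemma Bornology.IsBounded.eq_zero_of_forall_smul_mem {E : Type*} [NormedAddCommGroup E]
    [NormedSpace ℝ E] {S : Set E} (hS : IsBounded S) {x : E} (hx : ∀ c : ℝ, c • x ∈ S) :
    x = 0 := by
  obtain ⟨r, hr⟩ := hS.exists_norm_le
  by_contra hx0
  have hxpos : 0 < ‖x‖ := norm_pos_iff.mpr hx0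
  have := hr _ (hx ((|r| + 1) / ‖x‖))
  rw [norm_smul, Real.norm_eq_abs, abs_of_pos (by positivity), div_mul_cancel₀ _ hxpos.ne'] at this
  linarith [le_abs_self r]

theorem isGE_iInter_of_weights {ι : Type*} [Fintype ι] {n d : ℕ} {P : ι → Matrix (Fin n) (Fin n) ℝ}
    (hP : ∀ i, (P i).PosSemidef)
    (hT : Bornology.IsBounded (⋂ i, {x : Fin n → ℝ | x ⬝ᵥ (P i).mulVec x ≤ 1}))
    {w : ι → ℝ[X]} (hdeg : ∀ i, (w i).natDegree ≤ d)
    (hnonneg : ∀ i, ∀ t ∈ Icc (-1 : ℝ) 1, 0 ≤ (w i).eval t)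
    (hsum : ∀ t ∈ Icc (-1 : ℝ) 1, ∑ i, (w i).eval t ≤ 1)
    {t : ι → ℝ} (ht : ∀ i, t i ∈ Icc (-1 : ℝ) 1) (hpeak : ∀ i, (w i).eval (t i) = 1) :
    IsGE n d (⋂ i, {x : Fin n → ℝ | x ⬝ᵥ (P i).mulVec x ≤ 1}) := by
  classical
  have hquad (s : ℝ) (x : Fin n → ℝ) :
      x ⬝ᵥ ((weightedSum w P).map (eval s)) *ᵥ x = ∑ i, (w i).eval s * (x ⬝ᵥ P i *ᵥ x) := by
    rw [weightedSum_map_eval, dotProduct_sum_smul_mulVec]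
  have hq (i) (x : Fin n → ℝ) : 0 ≤ x ⬝ᵥ P i *ᵥ x := (hP i).dotProduct_mulVec_nonneg x
  have hle (i) (x : Fin n → ℝ) :
      x ⬝ᵥ P i *ᵥ x ≤ x ⬝ᵥ ((weightedSum w P).map (eval (t i))) *ᵥ x := by
    rw [hquad, ← Finset.add_sum_erase _ _ (Finset.mem_univ i), hpeak, one_mul,
      le_add_iff_nonneg_right]
    exact Finset.sum_nonneg fun j _ => mul_nonneg (hnonneg j _ (ht i)) (hq j x)
  refine ⟨weightedSum w P, isSymm_weightedSum w fun i => isHermitian_iff_isSymm.mp (hP i).1,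
    natDegree_weightedSum_le hdeg P, fun s hs => ?_, fun x hx => ?_, ?_⟩
  · rw [weightedSum_map_eval]
    exact posSemidef_sum _ fun i _ => (hP i).smul (hnonneg i s hs)
  · refine hT.eq_zero_of_forall_smul_mem fun c => mem_iInter.mpr fun i => ?_
    have hzero : x ⬝ᵥ P i *ᵥ x = 0 :=
      le_antisymm (by simpa [hx (t i) (ht i)] using hle i x) (hq i x)
    simp [mulVec_smul, hzero]
  · ext x
    simp only [mem_iInter, mem_ofPred_eq]
    refine ⟨fun hx s hs => ?_, fun hx i => (hle i x).trans (hx (t i) (ht i))⟩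
    rw [hquad]
    calc ∑ i, (w i).eval s * (x ⬝ᵥ P i *ᵥ x) ≤ ∑ i, (w i).eval s :=
          Finset.sum_le_sum fun i _ => mul_le_of_le_one_right (hnonneg i s hs) (hx i)
      _ ≤ 1 := hsum s hs

namespace Polynomial

variable {R : Type*} [CommRing R]

lemma sq_X_sub_C_dvd_iff {p : R[X]} {a : R} :
    (X - C a) ^ 2 ∣ p ↔ p.IsRoot a ∧ (derivative p).IsRoot a := by
  rcases eq_or_ne p 0 with rfl | hp
  · simp
  rw [← le_rootMultiplicity_iff hp, ← one_lt_rootMultiplicity_iff_isRoot hp]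
  rfl

lemma eval_divByMonic_X_sub_C (p : R[X]) (a : R) :
    (p /ₘ (X - C a)).eval a = (derivative p).eval a := by
  simpa using
    congr_arg (eval a) (divByMonic_add_X_sub_C_mul_derivative_divByMonic_eq_derivative p a)

lemma two_mul_eval_derivative_divByMonic_X_sub_C (p : R[X]) (a : R) :
    2 * (derivative (p /ₘ (X - C a))).eval a = (derivative (derivative p)).eval a := by
  have := congr_arg (eval a ∘ derivative)
    (divByMonic_add_X_sub_C_mul_derivative_divByMonic_eq_derivative p a)
  simp only [Function.comp_apply, derivative_add, derivative_mul, derivative_sub, derivative_X,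
    derivative_C, eval_add, eval_mul, eval_sub, eval_X, eval_C, eval_one, eval_zero] at this
  linear_combination this

lemma eq_zero_of_natDegree_lt_sum_of_pow_dvd {K ι : Type*} [Field K] {p : K[X]}
    {s : Finset ι} {c : ι → K} (hc : Set.InjOn c s) {e : ι → ℕ}
    (hdvd : ∀ i ∈ s, (X - C (c i)) ^ e i ∣ p) (hdeg : p.natDegree < ∑ i ∈ s, e i) : p = 0 := by
  by_contra hp
  have hprod : ∏ i ∈ s, (X - C (c i)) ^ e i ∣ p :=
    Finset.prod_dvd_of_coprime (fun i hi j hj hij => (isCoprime_X_sub_C_of_isUnit_sub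
      (sub_ne_zero.mpr (hc.ne hi hj hij)).isUnit).pow) hdvd
  have := natDegree_le_of_dvd hprod hp
  rw [natDegree_prod_of_monic _ _ fun i _ => (monic_X_sub_C _).pow _] at this
  simp only [natDegree_pow, natDegree_X_sub_C, mul_one] at this
  omega

end Polynomial

namespace Polynomial.Chebyshev

variable {R : Type*} [CommRing R]

lemma one_sub_sq_mul_eval_derivative_U_of_isRoot {n : ℤ} {c : R} (hc : (U R n).IsRoot c) :
    (1 - c ^ 2) * (derivative (U R n)).eval c = -((n + 1) * (T R (n + 1)).eval c) := by
  have := congr_arg (eval c) (add_one_mul_T_eq_poly_in_U (R := R) n)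
  simp only [eval_mul, eval_add, eval_sub, eval_pow, eval_X, eval_one, eval_intCast, hc.eq_zero,
    mul_zero, zero_sub] at this
  linear_combination this

lemma one_sub_sq_mul_eval_derivative_derivative_U_of_isRoot {n : ℤ} {c : R}
    (hc : (U R n).IsRoot c) :
    (1 - c ^ 2) * (derivative (derivative (U R n))).eval c =
      3 * c * (derivative (U R n)).eval c := by
  have := congr_arg (eval c) (one_sub_X_sq_mul_derivative_derivative_U_eq_poly_in_U (R := R) n)
  simpa only [Function.iterate_succ, Function.iterate_zero, Function.comp_apply, Function.id_def,
    eval_mul, eval_sub, eval_pow, eval_X, eval_one, eval_ofNat, eval_add, eval_intCast,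
    hc.eq_zero, mul_zero, sub_zero] using this

end Polynomial.Chebyshev

namespace ChebyshevLobatto

open Polynomial.Chebyshev

variable (M : ℕ)

noncomputable def node (k : ℕ) : ℝ := cos (k * π / (M + 1))

lemma node_mem_Icc (k : ℕ) : node M k ∈ Icc (-1 : ℝ) 1 := ⟨neg_one_le_cos _, cos_le_one _⟩

lemma node_zero : node M 0 = 1 := by simp [node]

lemma node_last : node M (M + 1) = -1 := by
  rw [node, Nat.cast_add_one, mul_div_cancel_left₀ _ (by positivity), cos_pi]

lemma injOn_node : InjOn (node M) (Iic (M + 1)) := by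
  have hmem {k : ℕ} (hk : k ∈ Iic (M + 1)) : k * π / (M + 1) ∈ Icc 0 π := by
    refine ⟨by positivity, div_le_of_le_mul₀ (by positivity) pi_pos.le ?_⟩
    rw [mul_comm]
    gcongr
    exact_mod_cast hk
  intro j hj k hk h
  have := injOn_cos (hmem hj) (hmem hk) h
  field_simp at this
  exact_mod_cast this

lemma isRoot_U_node {k : ℕ} (hk₀ : 0 < k) (hkM : k ≤ M) : (U ℝ M).IsRoot (node M k) := by
  have hsin : 0 < sin (k * π / (M + 1)) := by
    refine sin_pos_of_pos_of_lt_pi (by positivity) ?_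
    rw [div_lt_iff₀ (by positivity), mul_comm]
    gcongr
    exact_mod_cast Nat.lt_succ_of_le hkM
  have := U_real_cos (k * π / (M + 1)) M
  rw [Int.cast_natCast, mul_div_cancel₀ _ (by positivity), sin_nat_mul_pi] at this
  exact (mul_eq_zero.mp this).resolve_right hsin.ne'

lemma sq_one_sub_sq_mul_eval_derivative_U_node {k : ℕ} (hk₀ : 0 < k) (hkM : k ≤ M) :
    ((1 - node M k ^ 2) * (derivative (U ℝ M)).eval (node M k)) ^ 2 = (M + 1) ^ 2 := by
  have hT : (T ℝ (M + 1 : ℕ)).eval (node M k) ^ 2 = 1 := by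
    rw [node, ← Nat.cast_add_one, eval_T_real_cos_int_mul_pi_div (Nat.succ_ne_zero M),
      Int.cast_negOnePow_natCast, ← pow_mul, mul_comm, pow_mul, neg_one_sq, one_pow]
  rw [one_sub_sq_mul_eval_derivative_U_of_isRoot (isRoot_U_node M hk₀ hkM)]
  push_cast at hT ⊢
  linear_combination (M + 1 : ℝ) ^ 2 * hT

-- `U_M²`, resp. `(U_M / (X - c))²`, gives double zeros at the other interior nodes; the linear
-- factor `1 - c X` makes the derivative vanish at the node `c` itself.
noncomputable def weight (k : ℕ) : ℝ[X] :=
  if k = 0 then C (2 * (M + 1) ^ 2 : ℝ)⁻¹ * ((1 + X) * U ℝ M ^ 2)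
  else if k = M + 1 then C (2 * (M + 1) ^ 2 : ℝ)⁻¹ * ((1 - X) * U ℝ M ^ 2)
  else C ((M + 1) ^ 2 : ℝ)⁻¹ *
    ((1 - X ^ 2) * (1 - C (node M k) * X) * (U ℝ M /ₘ (X - C (node M k))) ^ 2)

lemma weight_zero : weight M 0 = C (2 * (M + 1) ^ 2 : ℝ)⁻¹ * ((1 + X) * U ℝ M ^ 2) := by
  simp [weight]

lemma weight_last : weight M (M + 1) = C (2 * (M + 1) ^ 2 : ℝ)⁻¹ * ((1 - X) * U ℝ M ^ 2) := by
  simp [weight]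

lemma weight_of_ne {k : ℕ} (hk₀ : k ≠ 0) (hkM : k ≠ M + 1) :
    weight M k = C ((M + 1) ^ 2 : ℝ)⁻¹ *
      ((1 - X ^ 2) * (1 - C (node M k) * X) * (U ℝ M /ₘ (X - C (node M k))) ^ 2) := by
  simp [weight, hk₀, hkM]

lemma natDegree_weight_le {k : ℕ} (hk : k ≤ M + 1) : (weight M k).natDegree ≤ 2 * M + 1 := by
  have hU : (U ℝ M).natDegree = M := natDegree_U_natCast (R := ℝ) M
  have hUsq : (U ℝ M ^ 2).natDegree ≤ 2 * M := natDegree_pow_le_of_le 2 hU.le |>.trans (by omega)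
  unfold weight
  split_ifs with h₀ hM
  · exact natDegree_C_mul_le _ _ |>.trans
      (natDegree_mul_le_of_le (m := 1) (by compute_degree) hUsq |>.trans (by omega))
  · exact natDegree_C_mul_le _ _ |>.trans
      (natDegree_mul_le_of_le (m := 1) (by compute_degree) hUsq |>.trans (by omega))
  · have hq : (U ℝ M /ₘ (X - C (node M k))).natDegree = M - 1 := by
      rw [natDegree_divByMonic _ (monic_X_sub_C _), hU, natDegree_X_sub_C]
    refine natDegree_C_mul_le _ _ |>.trans (natDegree_mul_le_of_le (m := 3)
      (natDegree_mul_le_of_le (m := 2) (n := 1) (by compute_degree) (by compute_degree))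
      (natDegree_pow_le_of_le 2 hq.le) |>.trans (by omega))

lemma weight_nonneg (k : ℕ) {t : ℝ} (ht : t ∈ Icc (-1 : ℝ) 1) : 0 ≤ (weight M k).eval t := by
  obtain ⟨ht₁, ht₂⟩ := ht
  obtain ⟨hc₁, hc₂⟩ := node_mem_Icc M k
  unfold weight
  split_ifs <;> simp only [eval_mul, eval_C, eval_add, eval_sub, eval_one, eval_X, eval_pow]
  · exact mul_nonneg (by positivity) (mul_nonneg (by linarith) (sq_nonneg _))
  · exact mul_nonneg (by positivity) (mul_nonneg (by linarith) (sq_nonneg _))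
  · exact mul_nonneg (by positivity) (mul_nonneg (mul_nonneg (by nlinarith) (by nlinarith))
      (sq_nonneg _))

lemma eval_one_weight {k : ℕ} (hk : k ≠ 0) : (weight M k).eval 1 = 0 := by
  rw [weight, if_neg hk]
  split_ifs <;> simp

lemma eval_neg_one_weight {k : ℕ} (hk : k ≠ M + 1) : (weight M k).eval (-1) = 0 := by
  unfold weight
  split_ifs <;> simp

lemma eval_one_weight_zero : (weight M 0).eval 1 = 1 := by
  rw [weight_zero]
  simp only [eval_mul, eval_C, eval_add, eval_one, eval_X, eval_pow, U_eval_one]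
  field_simp
  push_cast
  ring

lemma eval_neg_one_weight_last : (weight M (M + 1)).eval (-1) = 1 := by
  rw [weight_last]
  have hsq : ((-1 : ℝ) ^ M) ^ 2 = 1 := by rw [← pow_mul, mul_comm, pow_mul, neg_one_sq, one_pow]
  simp only [eval_mul, eval_C, eval_sub, eval_one, eval_X, eval_pow, U_eval_neg_one,
    Int.cast_negOnePow_natCast, mul_pow, hsq]
  field_simp
  push_cast
  ring

lemma eval_node_weight_self {k : ℕ} (hk₀ : 0 < k) (hkM : k ≤ M) :
    (weight M k).eval (node M k) = 1 := by
  have h := sq_one_sub_sq_mul_eval_derivative_U_node M hk₀ hkM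
  rw [weight_of_ne M hk₀.ne' (by omega)]
  simp only [eval_mul, eval_C, eval_sub, eval_one, eval_X, eval_pow, eval_divByMonic_X_sub_C]
  field_simp
  linear_combination h

lemma isRoot_derivative_weight_self {k : ℕ} (hk₀ : 0 < k) (hkM : k ≤ M) :
    (derivative (weight M k)).IsRoot (node M k) := by
  have h := one_sub_sq_mul_eval_derivative_derivative_U_of_isRoot (isRoot_U_node M hk₀ hkM)
  rw [weight_of_ne M hk₀.ne' (by omega), IsRoot.def]
  simp only [derivative_mul, derivative_C, derivative_sub, derivative_one, derivative_X,
    derivative_pow, eval_mul, eval_add, eval_sub, eval_C, eval_one, eval_X,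
    eval_pow, eval_zero, zero_mul, zero_add, eval_divByMonic_X_sub_C]
  have hq := two_mul_eval_derivative_divByMonic_X_sub_C (U ℝ M) (node M k)
  set c := node M k
  set A := (derivative (U ℝ M)).eval c
  linear_combination ((M + 1 : ℝ) ^ 2)⁻¹ * (1 - c ^ 2) * A * h +
    ((M + 1 : ℝ) ^ 2)⁻¹ * (1 - c ^ 2) ^ 2 * A * hq

lemma sq_dvd_weight {j k : ℕ} (hj : j ≤ M + 1) (hk₀ : 0 < k) (hkM : k ≤ M) (hjk : j ≠ k) :
    (X - C (node M k)) ^ 2 ∣ weight M j := by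
  have hU : X - C (node M k) ∣ U ℝ M := dvd_iff_isRoot.mpr (isRoot_U_node M hk₀ hkM)
  unfold weight
  split_ifs with h₀ hM
  · exact ((pow_dvd_pow_of_dvd hU 2).mul_left _).mul_left _
  · exact ((pow_dvd_pow_of_dvd hU 2).mul_left _).mul_left _
  · have hcop : IsCoprime (X - C (node M k)) (X - C (node M j)) :=
      isCoprime_X_sub_C_of_isUnit_sub (sub_ne_zero.mpr
        ((injOn_node M).ne (mem_Iic.mpr (by omega)) (mem_Iic.mpr hj) hjk.symm)).isUnit
    have hq : X - C (node M k) ∣ U ℝ M /ₘ (X - C (node M j)) := by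
      refine hcop.dvd_of_dvd_mul_left ?_
      rwa [mul_divByMonic_eq_iff_isRoot.mpr (isRoot_U_node M (by omega) (by omega))]
    exact ((pow_dvd_pow_of_dvd hq 2).mul_left _).mul_left _

lemma eval_node_weight {j k : ℕ} (hj : j ≤ M + 1) (hk : k ≤ M + 1) :
    (weight M j).eval (node M k) = if j = k then 1 else 0 := by
  rcases Nat.eq_zero_or_pos k with rfl | hk₀
  · rw [node_zero]
    split_ifs with h
    · rw [h, eval_one_weight_zero]
    · exact eval_one_weight M h
  rcases eq_or_ne k (M + 1) with rfl | hkM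
  · rw [node_last]
    split_ifs with h
    · rw [h, eval_neg_one_weight_last]
    · exact eval_neg_one_weight M h
  split_ifs with h
  · rw [h, eval_node_weight_self M hk₀ (by omega)]
  · exact (sq_X_sub_C_dvd_iff.mp (sq_dvd_weight M hj hk₀ (by omega) h)).1

lemma isRoot_derivative_weight {j k : ℕ} (hj : j ≤ M + 1) (hk₀ : 0 < k) (hkM : k ≤ M) :
    (derivative (weight M j)).IsRoot (node M k) := by
  rcases eq_or_ne j k with rfl | h
  · exact isRoot_derivative_weight_self M hk₀ hkM
  · exact (sq_X_sub_C_dvd_iff.mp (sq_dvd_weight M hj hk₀ hkM h)).2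

lemma sum_weight : ∑ k ∈ Finset.range (M + 2), weight M k = 1 := by
  rw [← sub_eq_zero]
  have hroot {k : ℕ} (hk : k ≤ M + 1) :
      (∑ j ∈ Finset.range (M + 2), weight M j - 1).IsRoot (node M k) := by
    rw [IsRoot.def, eval_sub, eval_finsetSum, Finset.sum_congr rfl fun j hj =>
      eval_node_weight M (Nat.lt_succ_iff.mp (Finset.mem_range.mp hj)) hk]
    simp [Nat.lt_succ_of_le hk]
  refine eq_zero_of_natDegree_lt_sum_of_pow_dvd (s := Finset.range (M + 2)) (c := node M)
    (e := fun k => if k = 0 ∨ k = M + 1 then 1 else 2) ?_ (fun k hk => ?_) ?_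
  · exact (injOn_node M).mono fun k hk => Nat.lt_succ_iff.mp (Finset.mem_range.mp hk)
  · have hk : k ≤ M + 1 := Nat.lt_succ_iff.mp (Finset.mem_range.mp hk)
    split_ifs with h
    · rw [pow_one, dvd_iff_isRoot]
      exact hroot hk
    · refine sq_X_sub_C_dvd_iff.mpr ⟨hroot hk, ?_⟩
      rw [derivative_sub, derivative_one, sub_zero, derivative_sum, IsRoot.def, eval_finsetSum]
      exact Finset.sum_eq_zero fun j hj => isRoot_derivative_weight M
        (Nat.lt_succ_iff.mp (Finset.mem_range.mp hj)) (by omega) (by omega)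
  · have hdeg : (∑ j ∈ Finset.range (M + 2), weight M j - 1).natDegree ≤ 2 * M + 1 :=
      (natDegree_sub_le _ _).trans (max_le (natDegree_sum_le_of_forall_le _ _ fun j hj =>
        natDegree_weight_le M (Nat.lt_succ_iff.mp (Finset.mem_range.mp hj))) (by simp))
    have hmult : ∑ k ∈ Finset.range (M + 2), (if k = 0 ∨ k = M + 1 then 1 else 2) = 2 * M + 2 := by
      rw [Finset.sum_range_succ, Finset.sum_range_succ',
        Finset.sum_congr rfl fun k hk => if_neg (by simp at hk; omega), Finset.sum_const,
        Finset.card_range, smul_eq_mul, if_pos (Or.inr rfl), if_pos (Or.inl rfl)]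
      ring
    omega

end ChebyshevLobatto

/-- for `m ≥ 2` positive semidefinite matrices `P₁, …, P_m`, if the
intersection `T = ⋂ᵢ {x : xᵀPᵢx ≤ 1}` of the corresponding semiellipsoids is compact, then
`T` is a generalized ellipsoid of degree `d` for some `d ≤ 2m - 3`. -/
theorem stmt_11 {n m : ℕ} (hm : 2 ≤ m) (P : Fin m → Matrix (Fin n) (Fin n) ℝ)
    (hP : ∀ i, (P i).PosSemidef)
    (hT : IsCompact (⋂ i : Fin m, {x : Fin n → ℝ | x ⬝ᵥ (P i).mulVec x ≤ 1})) :
    ∃ d : ℕ, d ≤ 2 * m - 3 ∧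
      IsGE n d (⋂ i : Fin m, {x : Fin n → ℝ | x ⬝ᵥ (P i).mulVec x ≤ 1}) := by
  obtain ⟨M, rfl⟩ : ∃ M, m = M + 2 := ⟨m - 2, by omega⟩
  open ChebyshevLobatto in
  exact ⟨2 * M + 1, by omega, isGE_iInter_of_weights hP hT.isBounded
    (fun k => natDegree_weight_le M k.is_le) (fun k _ ht => weight_nonneg M k ht)
    (fun t _ => by
      rw [← eval_finsetSum, Fin.sum_univ_eq_sum_range (weight M), sum_weight, eval_one])
    (fun k => node_mem_Icc M k) (fun k => by rw [eval_node_weight M k.is_le k.is_le, if_pos rfl])⟩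
end

section
/- Let m ≥ 3 be an integer and let a₂ < a₃ < ⋯ < a_{m-1} be real numbers in the open interval (-1,1) such that the polynomial ℓ(t) = ∏_{j=2}^{m-1} (t - a_j) satisfies the Legendre differential equation (1-t²)ℓ''(t) - 2tℓ'(t) + (m-2)(m-1)ℓ(t) = 0 for all t ∈ ℝ. Then for every i ∈ {2, …, m-1}, the derivative of the polynomial q_i(t) = (1-t²) · ∏_{j ∈ {2,…,m-1}, j ≠ i} (t - a_j)² vanishes at t = a_i. -/
/-!
Write `ℓ = (X - aᵢ) p` with `p = ∏_{j ≠ i} (X - aⱼ)`. At the root `aᵢ` one has `ℓ' = p` and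
`ℓ'' = 2p'`, so the Legendre equation at `aᵢ` reads `(1 - aᵢ²) p'(aᵢ) - aᵢ p(aᵢ) = 0`.
On the other hand `((1 - X²) p²)' = 2p ((1 - X²) p' - X p)`, which therefore vanishes at `aᵢ`.
-/

open Polynomial

namespace Polynomial

variable {R : Type*} [CommRing R]

theorem eval_derivative_X_sub_C_mul (p : R[X]) (c : R) :
    (derivative ((X - C c) * p)).eval c = p.eval c := by
  simp

theorem eval_derivative_derivative_X_sub_C_mul (p : R[X]) (c : R) :
    (derivative (derivative ((X - C c) * p))).eval c = 2 * (derivative p).eval c := by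
  simp only [derivative_mul, derivative_add, derivative_sub, derivative_X, derivative_C,
    sub_zero, one_mul, eval_add, eval_mul, eval_sub, eval_X, eval_C, sub_self, zero_mul]
  ring

theorem derivative_one_sub_X_sq_mul_sq (p : R[X]) :
    derivative ((1 - X ^ 2) * p ^ 2) = 2 * p * ((1 - X ^ 2) * derivative p - X * p) := by
  simp only [derivative_mul, derivative_sub, derivative_one, derivative_sq, derivative_X,
    map_ofNat]
  ring

end Polynomial

theorem stmt_13_general {m : ℕ} (a : Fin (m - 2) → ℝ)
    (hleg : ∀ t : ℝ,
      (1 - t ^ 2) *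
          Polynomial.eval t (Polynomial.derivative (Polynomial.derivative
            (∏ j : Fin (m - 2), ((Polynomial.X : Polynomial ℝ) - Polynomial.C (a j)))))
        - 2 * t *
          Polynomial.eval t (Polynomial.derivative
            (∏ j : Fin (m - 2), ((Polynomial.X : Polynomial ℝ) - Polynomial.C (a j))))
        + ((m : ℝ) - 2) * ((m : ℝ) - 1) *
          Polynomial.eval t
            (∏ j : Fin (m - 2), ((Polynomial.X : Polynomial ℝ) - Polynomial.C (a j)))
        = 0) :
    ∀ i : Fin (m - 2),
      Polynomial.eval (a i) (Polynomial.derivative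
        ((1 - (Polynomial.X : Polynomial ℝ) ^ 2) *
          ∏ j ∈ Finset.univ.erase i,
            ((Polynomial.X : Polynomial ℝ) - Polynomial.C (a j)) ^ 2)) = 0 := by
  intro i
  set p : ℝ[X] := ∏ j ∈ Finset.univ.erase i, (X - C (a j))
  have hℓ : ∏ j, (X - C (a j)) = (X - C (a i)) * p :=
    (Finset.mul_prod_erase _ _ (Finset.mem_univ i)).symm
  have hroot := hleg (a i)
  rw [hℓ, eval_derivative_derivative_X_sub_C_mul, eval_derivative_X_sub_C_mul, eval_mul,
    eval_sub, eval_X, eval_C, sub_self, zero_mul, mul_zero, add_zero] at hroot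
  rw [Finset.prod_pow, derivative_one_sub_X_sq_mul_sq]
  simp only [eval_mul, eval_sub, eval_one, eval_pow, eval_X, eval_ofNat]
  linear_combination p.eval (a i) * hroot

/-- let `m ≥ 3` and let `a₂ < ⋯ < a_{m-1}` (here indexed by `Fin (m-2)`) be
reals in `(-1,1)` such that `ℓ(t) = ∏ⱼ (t - aⱼ)` satisfies the Legendre differential
equation `(1-t²)ℓ''(t) - 2tℓ'(t) + (m-2)(m-1)ℓ(t) = 0`. Then for each `i`, the derivative
of `qᵢ(t) = (1-t²)·∏_{j ≠ i} (t - aⱼ)²` vanishes at `t = aᵢ`. -/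
theorem stmt_13 {m : ℕ} (hm : 3 ≤ m) (a : Fin (m - 2) → ℝ)
    (hmono : StrictMono a) (hrange : ∀ j, a j ∈ Set.Ioo (-1 : ℝ) 1)
    (hleg : ∀ t : ℝ,
      (1 - t ^ 2) *
          Polynomial.eval t (Polynomial.derivative (Polynomial.derivative
            (∏ j : Fin (m - 2), ((Polynomial.X : Polynomial ℝ) - Polynomial.C (a j)))))
        - 2 * t *
          Polynomial.eval t (Polynomial.derivative
            (∏ j : Fin (m - 2), ((Polynomial.X : Polynomial ℝ) - Polynomial.C (a j))))
        + ((m : ℝ) - 2) * ((m : ℝ) - 1) *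
          Polynomial.eval t
            (∏ j : Fin (m - 2), ((Polynomial.X : Polynomial ℝ) - Polynomial.C (a j)))
        = 0) :
    ∀ i : Fin (m - 2),
      Polynomial.eval (a i) (Polynomial.derivative
        ((1 - (Polynomial.X : Polynomial ℝ) ^ 2) *
          ∏ j ∈ Finset.univ.erase i,
            ((Polynomial.X : Polynomial ℝ) - Polynomial.C (a j)) ^ 2)) = 0 :=
  stmt_13_general a hleg
end

section
/- Let m ≥ 2 be an integer and let p₁, …, p_m be univariate real polynomials satisfying: (1) pᵢ(t) ≥ 0 for all t ∈ [-1,1] and all i = 1,…,m; (2) Σ_{i=1}^m pᵢ(t) = 1 for all t ∈ [-1,1]; and (3) for every i = 1,…,m there exists tᵢ ∈ [-1,1] with pᵢ(tᵢ) = 1. Then at least one of the polynomials p₁, …, p_m has degree at least 2m-3. -/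
/-!
Let `tᵢ ∈ [-1,1]` be a point with `pᵢ(tᵢ) = 1`. Since the `pⱼ` are nonnegative and sum to `1`
there, every other `pⱼ` vanishes at `tᵢ`; in particular the `tᵢ` are distinct. So `pᵢ` has the
`m - 1` roots `tⱼ`, `j ≠ i`, and each of them lying in `(-1,1)` is a local minimum of `pᵢ`, hence a
root of multiplicity at least two. Choosing `i` with `tᵢ ∈ {-1,1}` if some `tᵢ` is an endpoint, at
most one of the other `tⱼ` is an endpoint, so `deg pᵢ ≥ 2(m - 1) - 1 = 2m - 3`.
-/

open Polynomial Finset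

theorem Finset.apply_eq_zero_of_sum_eq_apply {ι M : Type*} [AddCommMonoid M] [PartialOrder M]
    [IsOrderedCancelAddMonoid M] {s : Finset ι} {f : ι → M} {i j : ι}
    (hf : ∀ k ∈ s, 0 ≤ f k) (hi : i ∈ s) (hj : j ∈ s) (hji : j ≠ i)
    (hsum : ∑ k ∈ s, f k = f i) : f j = 0 := by
  classical
  rw [← add_sum_erase s f hi, add_eq_left] at hsum
  exact (sum_eq_zero_iff_of_nonneg fun k hk => hf k (mem_of_mem_erase hk)).1 hsum j
    (mem_erase.2 ⟨hji, hj⟩)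

theorem Multiset.sum_count_le_card {ι : Type*} [DecidableEq ι] (s : Finset ι) (m : Multiset ι) :
    ∑ a ∈ s, m.count a ≤ Multiset.card m :=
  calc ∑ a ∈ s, m.count a ≤ ∑ a ∈ s ∪ m.toFinset, m.count a :=
        sum_le_sum_of_subset subset_union_left
    _ = Multiset.card m :=
        Multiset.sum_count_eq_card fun _ ha => mem_union_right _ (Multiset.mem_toFinset.2 ha)

theorem Finset.exists_card_erase_le_card_filter_mem_Ioo_add_one {α : Type*} [LinearOrder α]
    {a b : α} {S : Finset α} (hS : ↑S ⊆ Set.Icc a b) (hne : S.Nonempty) :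
    ∃ c ∈ S, #(S.erase c) ≤ #((S.erase c).filter (· ∈ Set.Ioo a b)) + 1 := by
  set E := S.filter (· ∉ Set.Ioo a b)
  have hE : E ⊆ {a, b} := fun x hx => by
    obtain ⟨hxS, hx⟩ := mem_filter.1 hx
    have := hS hxS
    simp only [Set.mem_Ioo, Set.mem_Icc, not_and_or, not_lt] at hx this
    simp only [mem_insert, mem_singleton]
    rcases hx with hx | hx
    · exact Or.inl (le_antisymm hx this.1)
    · exact Or.inr (le_antisymm this.2 hx)
  obtain ⟨c, hcS, hcE⟩ : ∃ c ∈ S, E.Nonempty → c ∈ E := by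
    by_cases h : E.Nonempty
    · obtain ⟨c, hc⟩ := h
      exact ⟨c, (mem_filter.1 hc).1, fun _ => hc⟩
    · exact ⟨hne.choose, hne.choose_spec, fun h' => absurd h' h⟩
  refine ⟨c, hcS, ?_⟩
  have hbad : #(E.erase c) ≤ 1 := by
    rcases E.eq_empty_or_nonempty with h | h
    · simp [h]
    · rw [card_erase_of_mem (hcE h)]
      have := (card_le_card hE).trans card_le_two
      omega
  have hbad' : (S.erase c).filter (· ∉ Set.Ioo a b) = E.erase c := filter_erase ..
  rw [← card_filter_add_card_filter_not (p := (· ∈ Set.Ioo a b)), hbad']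
  omega

namespace Polynomial

theorem sum_rootMultiplicity_le_natDegree {R : Type*} [CommRing R] [IsDomain R] (p : R[X])
    (s : Finset R) : ∑ a ∈ s, p.rootMultiplicity a ≤ p.natDegree := by
  classical
  simpa only [count_roots] using (Multiset.sum_count_le_card s p.roots).trans (card_roots' p)

theorem one_lt_rootMultiplicity_of_isLocalMin {p : ℝ[X]} {a : ℝ} (hp : p ≠ 0)
    (hroot : p.IsRoot a) (hmin : IsLocalMin p.eval a) : 1 < p.rootMultiplicity a :=
  (one_lt_rootMultiplicity_iff_isRoot hp).2
    ⟨hroot, by simpa only [Polynomial.deriv, IsRoot.def] using hmin.deriv_eq_zero⟩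

theorem card_add_card_le_natDegree {p : ℝ[X]} (hp : p ≠ 0) {S T : Finset ℝ} (hTS : T ⊆ S)
    (hroot : ∀ a ∈ S, p.IsRoot a) (hmin : ∀ a ∈ T, IsLocalMin p.eval a) :
    #S + #T ≤ p.natDegree := by
  calc #S + #T = ∑ a ∈ S, (1 + if a ∈ T then 1 else 0) := by
        rw [sum_add_distrib, sum_boole, filter_mem_eq_inter, inter_eq_right.2 hTS,
          card_eq_sum_ones, Nat.cast_id]
    _ ≤ ∑ a ∈ S, p.rootMultiplicity a := sum_le_sum fun a ha => by
        split_ifs with haT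
        · exact one_lt_rootMultiplicity_of_isLocalMin hp (hroot a ha) (hmin a haT)
        · exact (rootMultiplicity_pos hp).2 (hroot a ha)
    _ ≤ p.natDegree := sum_rootMultiplicity_le_natDegree p S

end Polynomial

theorem stmt_14_general {m : ℕ} (p : Fin m → Polynomial ℝ)
    (hnonneg : ∀ i, ∀ t ∈ Set.Icc (-1 : ℝ) 1, 0 ≤ (p i).eval t)
    (hsum : ∀ t ∈ Set.Icc (-1 : ℝ) 1, ∑ i : Fin m, (p i).eval t = 1)
    (hattain : ∀ i, ∃ t ∈ Set.Icc (-1 : ℝ) 1, (p i).eval t = 1) :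
    ∃ i, 2 * m - 3 ≤ (p i).natDegree := by
  choose t ht hpt using hattain
  have hvanish : ∀ i j, j ≠ i → (p j).eval (t i) = 0 := fun i j hji =>
    apply_eq_zero_of_sum_eq_apply (f := fun k => (p k).eval (t i))
      (fun k _ => hnonneg k _ (ht i)) (mem_univ i) (mem_univ j) hji
      ((hsum _ (ht i)).trans (hpt i).symm)
  have ht_inj : Function.Injective t := fun i j hij => by
    by_contra hne
    have := hvanish j i hne
    rw [← hij, hpt i] at this
    exact one_ne_zero this
  have : Nonempty (Fin m) := by
    by_contra h
    simpa [not_nonempty_iff.1 h] using hsum 0 (by norm_num)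
  obtain ⟨c, hc, hcard⟩ := exists_card_erase_le_card_filter_mem_Ioo_add_one
    (S := univ.image t) (by simpa [Set.range_subset_iff] using ht) (univ_nonempty.image t)
  obtain ⟨i, -, rfl⟩ := mem_image.1 hc
  refine ⟨i, ?_⟩
  have hp : p i ≠ 0 := fun h => by simpa [h] using hpt i
  have hroot : ∀ a ∈ (univ.image t).erase (t i), (p i).IsRoot a := fun a ha => by
    obtain ⟨hai, ha⟩ := mem_erase.1 ha
    obtain ⟨j, -, rfl⟩ := mem_image.1 ha
    exact hvanish j i fun h => hai (congrArg t h.symm)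
  have hmin : ∀ a ∈ ((univ.image t).erase (t i)).filter (· ∈ Set.Ioo (-1) 1),
      IsLocalMin (p i).eval a := fun a ha => by
    obtain ⟨ha, haI⟩ := mem_filter.1 ha
    refine IsMinOn.isLocalMin (fun x hx => ?_) (Icc_mem_nhds haI.1 haI.2)
    simpa only [Set.mem_ofPred_eq, (hroot a ha).eq_zero] using hnonneg i x hx
  have hdeg := card_add_card_le_natDegree hp (filter_subset _ _) hroot hmin
  rw [card_erase_of_mem hc, card_image_of_injective _ ht_inj, card_univ, Fintype.card_fin]
    at hcard hdeg
  omega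

/-- for `m ≥ 2`, if univariate real polynomials `p₁, …, p_m` are nonnegative
on `[-1,1]`, sum to `1` on `[-1,1]`, and each attain the value `1` somewhere on `[-1,1]`,
then at least one of them has degree at least `2m - 3`. -/
theorem stmt_14 {m : ℕ} (hm : 2 ≤ m) (p : Fin m → Polynomial ℝ)
    (hnonneg : ∀ i, ∀ t ∈ Set.Icc (-1 : ℝ) 1, 0 ≤ (p i).eval t)
    (hsum : ∀ t ∈ Set.Icc (-1 : ℝ) 1, ∑ i : Fin m, (p i).eval t = 1)
    (hattain : ∀ i, ∃ t ∈ Set.Icc (-1 : ℝ) 1, (p i).eval t = 1) :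
    ∃ i, 2 * m - 3 ≤ (p i).natDegree :=
  stmt_14_general p hnonneg hsum hattain
end

section
/- Let H ∈ ℝ^{m×n} with rows h₁ᵀ, …, h_mᵀ, let Â, Ǎ ∈ ℝ^{n×n}, and define A(t) = ((1+t)/2)·Â + ((1-t)/2)·Ǎ and S = {x ∈ ℝⁿ : H·Aᵏ·x ≤ 𝟏 (entrywise) for all integers k ≥ 0 and all A ∈ conv(Â, Ǎ)}. Suppose P(t) is a symmetric n×n univariate polynomial matrix of degree at most d satisfying P(t) ⪰ 0 for all t ∈ [-1,1], ⋂_{t∈[-1,1]} Ker(P(t)) = {0}, P(t) - A(t)ᵀP(t)A(t) ⪰ 0 for all t ∈ [-1,1], and P(t) ⪰ hᵢhᵢᵀ for all t ∈ [-1,1] and i = 1,…,m. Then the generalized ellipsoid E = {x ∈ ℝⁿ : xᵀP(t)x ≤ 1 for all t ∈ [-1,1]} satisfies E ⊆ S. -/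
/-!
Fix `λ ∈ [0,1]` and put `t = 2λ - 1`, so that `A(t)` is the convex combination `λ Â + (1-λ) Ǎ`.
The Lyapunov inequality `P(t) ⪰ A(t)ᵀ P(t) A(t)` says that the quadratic form of `P(t)` does not
increase along the orbit `x, A(t) x, A(t)² x, …`, so a point of `E` stays in the sublevel set
`{y : yᵀ P(t) y ≤ 1}`; on that set `P(t) ⪰ hᵢ hᵢᵀ` gives `(hᵢᵀ y)² ≤ 1`, hence `hᵢᵀ y ≤ 1`.
-/

open Matrix

namespace Matrix

variable {ι R : Type*} [Fintype ι] [CommRing R]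

lemma dotProduct_transpose_mul_mul_mulVec (Q B : Matrix ι ι R) (y : ι → R) :
    y ⬝ᵥ (Bᵀ * Q * B) *ᵥ y = (B *ᵥ y) ⬝ᵥ Q *ᵥ (B *ᵥ y) := by
  rw [Matrix.mul_assoc, ← mulVec_mulVec, ← mulVec_mulVec, dotProduct_mulVec, vecMul_transpose]

lemma dotProduct_vecMulVec_self_mulVec (h y : ι → R) :
    y ⬝ᵥ vecMulVec h h *ᵥ y = (h ⬝ᵥ y) ^ 2 := by
  rw [vecMulVec_mulVec, op_smul_eq_smul, dotProduct_smul, smul_eq_mul,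
    dotProduct_comm y, sq]

variable [StarRing R] [TrivialStar R]

lemma PosSemidef.dotProduct_mulVec_pow_le [PartialOrder R] [IsOrderedRing R] [DecidableEq ι]
    {Q B : Matrix ι ι R} (hQB : (Q - Bᵀ * Q * B).PosSemidef) (x : ι → R) (k : ℕ) :
    (B ^ k *ᵥ x) ⬝ᵥ Q *ᵥ (B ^ k *ᵥ x) ≤ x ⬝ᵥ Q *ᵥ x := by
  induction k with
  | zero => simp
  | succ k ih =>
    have hstep := hQB.dotProduct_mulVec_nonneg (B ^ k *ᵥ x)
    rw [star_trivial, sub_mulVec, dotProduct_sub, dotProduct_transpose_mul_mul_mulVec,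
      sub_nonneg] at hstep
    rw [pow_succ', ← mulVec_mulVec]
    exact hstep.trans ih

lemma PosSemidef.dotProduct_le_one_of_sub_vecMulVec [LinearOrder R] [IsStrictOrderedRing R]
    {Q : Matrix ι ι R} {h y : ι → R}
    (hQh : (Q - vecMulVec h h).PosSemidef) (hy : y ⬝ᵥ Q *ᵥ y ≤ 1) : h ⬝ᵥ y ≤ 1 := by
  have hsq := hQh.dotProduct_mulVec_nonneg y
  rw [star_trivial, sub_mulVec, dotProduct_sub, dotProduct_vecMulVec_self_mulVec,
    sub_nonneg] at hsq
  exact (abs_le.1 ((sq_le_one_iff_abs_le_one _).1 (hsq.trans hy))).2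

end Matrix

theorem stmt_19_general {m n : ℕ} (H : Matrix (Fin m) (Fin n) ℝ)
    (Ahat Acheck : Matrix (Fin n) (Fin n) ℝ)
    (P : Matrix (Fin n) (Fin n) (Polynomial ℝ))
    (hlyap : ∀ t ∈ Set.Icc (-1 : ℝ) 1,
      (P.map (Polynomial.eval t) -
        (((1 + t) / 2) • Ahat + ((1 - t) / 2) • Acheck)ᵀ *
          P.map (Polynomial.eval t) *
          (((1 + t) / 2) • Ahat + ((1 - t) / 2) • Acheck)).PosSemidef)
    (hrow : ∀ t ∈ Set.Icc (-1 : ℝ) 1, ∀ i : Fin m,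
      (P.map (Polynomial.eval t) -
        Matrix.vecMulVec (fun j => H i j) (fun j => H i j)).PosSemidef) :
    {x : Fin n → ℝ | ∀ t ∈ Set.Icc (-1 : ℝ) 1,
        x ⬝ᵥ (P.map (Polynomial.eval t)).mulVec x ≤ 1} ⊆
      {x : Fin n → ℝ | ∀ k : ℕ, ∀ lam ∈ Set.Icc (0 : ℝ) 1, ∀ i : Fin m,
        (H.mulVec (((lam • Ahat + (1 - lam) • Acheck) ^ k).mulVec x)) i ≤ 1} := by
  intro x hx k lam ⟨hlam0, hlam1⟩ i
  have ht : 2 * lam - 1 ∈ Set.Icc (-1 : ℝ) 1 := ⟨by linarith, by linarith⟩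
  have hA : ((1 + (2 * lam - 1)) / 2) • Ahat + ((1 - (2 * lam - 1)) / 2) • Acheck =
      lam • Ahat + (1 - lam) • Acheck := by
    congr 2 <;> ring
  have hdecay := (hlyap _ ht).dotProduct_mulVec_pow_le x k
  rw [hA] at hdecay
  exact (hrow _ ht i).dotProduct_le_one_of_sub_vecMulVec (hdecay.trans (hx _ ht))

/-- robust-to-dynamics optimization. If the polynomial matrix `P(t)` is
symmetric of degree at most `d`, satisfies the psd and kernel conditions on `[-1,1]`,
satisfies `P(t) - A(t)ᵀP(t)A(t) ⪰ 0` on `[-1,1]` (where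
`A(t) = ((1+t)/2)·Â + ((1-t)/2)·Ǎ`), and satisfies `P(t) ⪰ hᵢhᵢᵀ` on `[-1,1]` for every
row `hᵢᵀ` of `H`, then the generalized ellipsoid
`E = {x : xᵀP(t)x ≤ 1 ∀ t ∈ [-1,1]}` is contained in
`S = {x : H·Aᵏ·x ≤ 𝟏 ∀ k ≥ 0, ∀ A ∈ conv(Â, Ǎ)}`. -/
theorem stmt_19 {m n : ℕ} (H : Matrix (Fin m) (Fin n) ℝ)
    (Ahat Acheck : Matrix (Fin n) (Fin n) ℝ) (d : ℕ)
    (P : Matrix (Fin n) (Fin n) (Polynomial ℝ))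
    (hsymm : P.IsSymm)
    (hdeg : ∀ i j, (P i j).natDegree ≤ d)
    (hpsd : ∀ t ∈ Set.Icc (-1 : ℝ) 1, (P.map (Polynomial.eval t)).PosSemidef)
    (hker : ∀ x : Fin n → ℝ,
      (∀ t ∈ Set.Icc (-1 : ℝ) 1, (P.map (Polynomial.eval t)).mulVec x = 0) → x = 0)
    (hlyap : ∀ t ∈ Set.Icc (-1 : ℝ) 1,
      (P.map (Polynomial.eval t) -
        (((1 + t) / 2) • Ahat + ((1 - t) / 2) • Acheck)ᵀ *
          P.map (Polynomial.eval t) *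
          (((1 + t) / 2) • Ahat + ((1 - t) / 2) • Acheck)).PosSemidef)
    (hrow : ∀ t ∈ Set.Icc (-1 : ℝ) 1, ∀ i : Fin m,
      (P.map (Polynomial.eval t) -
        Matrix.vecMulVec (fun j => H i j) (fun j => H i j)).PosSemidef) :
    {x : Fin n → ℝ | ∀ t ∈ Set.Icc (-1 : ℝ) 1,
        x ⬝ᵥ (P.map (Polynomial.eval t)).mulVec x ≤ 1} ⊆
      {x : Fin n → ℝ | ∀ k : ℕ, ∀ lam ∈ Set.Icc (0 : ℝ) 1, ∀ i : Fin m,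
        (H.mulVec (((lam • Ahat + (1 - lam) • Acheck) ^ k).mulVec x)) i ≤ 1} :=
  stmt_19_general H Ahat Acheck P hlyap hrow
end
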